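/- Let G be a finite abelian group of order q and MDS(n,d) ≤ G^n an additive MDS code with homogeneous weight enumerator M_{n,d}(x,y) = ∑_{c ∈ MDS(n,d)} x^{n−wt(c)} y^{wt(c)}. Then (M_{n,d}(x,y) − x^n)/(q−1) equals the coefficient of t^{n−d} in the formal power series [xt + y(1−t)]^n / ((1−t)(1−qt)). -/

import Mathlib

/-!
Writing `x = y + (x - y)` in every coordinate outside the support of a word `c` gives
`x^(n - wt c) y^(wt c) = ∑_{T ⊇ supp c} y^|T| (x - y)^(n - |T|)`, so
`W_C = ∑_T A_T y^|T| (x - y)^(n - |T|)`, where `A_T` is the number of codewords supported in `T`.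
For an MDS code `A_T = q^(|T| + 1 - d)` (truncated subtraction): codewords supported in `T` are
determined by their values on any `|T| + 1 - d` coordinates of `T`, because two of them differ in
at most `d - 1` places; conversely the restriction of `C` to the `n - |T|` coordinates outside `T`
has kernel of size `A_T`, whence `q^(n + 1 - d) ≤ A_T q^(n - |T|)`.
On the other side `(q - 1) / ((1 - t)(1 - qt)) = ∑_m (q^(m + 1) - 1) t^m` and
`xt + y(1 - t) = y + (x - y)t`, and the coefficient of `t^(n - d)` is the same binomial sum.
-/

open MvPolynomial

/-- The homogeneous weight enumerator `W_C(x,y) = ∑_{c ∈ C} x^(n - wt c) · y^(wt c)`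
of a (finite) set of words `C ⊆ Gⁿ`, as a polynomial in `x = X 0`, `y = X 1`. -/
noncomputable def weightEnum {G : Type*} [AddCommGroup G] [Fintype G] [DecidableEq G]
    (n : ℕ) (C : Set (Fin n → G)) : MvPolynomial (Fin 2) ℚ :=
  ∑ᶠ c ∈ C, X 0 ^ (n - hammingNorm c) * X 1 ^ hammingNorm c

open Finset

section Hamming

variable {ι G : Type*} [Fintype ι] [DecidableEq G]

theorem pow_mul_pow_hammingNorm_eq_sum [DecidableEq ι] [Zero G] {R : Type*} [CommRing R]
    (c : ι → G) (x y : R) :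
    x ^ (Fintype.card ι - hammingNorm c) * y ^ hammingNorm c
      = ∑ T : Finset ι,
          if ∀ i ∉ T, c i = 0 then y ^ #T * (x - y) ^ (Fintype.card ι - #T) else 0 := by
  have hzeros : #{i | c i = 0} = Fintype.card ι - hammingNorm c := by
    have := card_filter_add_card_filter_not (s := univ) (fun i => c i = 0)
    rw [card_univ] at this
    simp only [hammingNorm, ne_eq]
    omega
  calc x ^ (Fintype.card ι - hammingNorm c) * y ^ hammingNorm c
      = ∏ i, (y + if c i = 0 then x - y else 0) := by
        simp_rw [add_ite, add_sub_cancel, add_zero]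
        rw [prod_ite, prod_const, prod_const, hzeros]
        rfl
    _ = _ := by
        rw [prod_add, powerset_univ]
        refine sum_congr rfl fun T _ => ?_
        rw [prod_ite_zero, prod_const, prod_const, ← compl_eq_univ_sdiff, card_compl, mul_ite,
          mul_zero]
        simp

theorem hammingNorm_le_card_of_forall_notMem [Zero G] {c : ι → G} {s : Finset ι}
    (hc : ∀ i ∉ s, c i = 0) : hammingNorm c ≤ #s :=
  card_le_card fun i hi => by_contra fun his => (mem_filter.mp hi).2 (hc i his)

theorem eq_of_mem_of_forall_notMem_eq [AddCommGroup G] {C : AddSubgroup (ι → G)} {d : ℕ}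
    (hC : ∀ c ∈ C, c ≠ 0 → d ≤ hammingNorm c) {a b : ι → G} (ha : a ∈ C) (hb : b ∈ C)
    {s : Finset ι} (hs : #s < d) (hab : ∀ i ∉ s, a i = b i) : a = b := by
  by_contra hne
  have := hC (a - b) (sub_mem ha hb) (sub_ne_zero.mpr hne)
  have := hammingNorm_le_card_of_forall_notMem (c := a - b) (s := s) fun i hi => by
    simp [hab i hi]
  omega

end Hamming

section Subcode

variable {ι G : Type*} [Fintype ι] [DecidableEq ι] [AddCommGroup G]

def restrictAddMonoidHom (s : Finset ι) : (ι → G) →+ (s → G) where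
  toFun c i := c i
  map_zero' := rfl
  map_add' _ _ := rfl

def subcodeSupportedIn (C : AddSubgroup (ι → G)) (T : Finset ι) : AddSubgroup (ι → G) :=
  (restrictAddMonoidHom Tᶜ).ker ⊓ C

theorem mem_subcodeSupportedIn {C : AddSubgroup (ι → G)} {T : Finset ι} {c : ι → G} :
    c ∈ subcodeSupportedIn C T ↔ c ∈ C ∧ ∀ i ∉ T, c i = 0 := by
  simp [subcodeSupportedIn, restrictAddMonoidHom, funext_iff, and_comm]

variable [Fintype G]

theorem card_le_card_subcodeSupportedIn_mul_pow (C : AddSubgroup (ι → G)) (T : Finset ι) :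
    Nat.card C ≤ Nat.card (subcodeSupportedIn C T) * Fintype.card G ^ (Fintype.card ι - #T) := by
  have hcard := AddSubgroup.relIndex_mul_relIndex ⊥ (subcodeSupportedIn C T) C bot_le inf_le_right
  rw [AddSubgroup.relIndex_bot_left, AddSubgroup.relIndex_bot_left, subcodeSupportedIn,
    AddSubgroup.inf_relIndex_right, AddSubgroup.relIndex_ker] at hcard
  rw [← hcard]
  refine Nat.mul_le_mul_left _ ?_
  calc Nat.card (C.map (restrictAddMonoidHom Tᶜ)) ≤ Nat.card ((Tᶜ : Finset ι) → G) :=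
        Nat.card_le_card_of_injective _ Subtype.val_injective
    _ = _ := by simp

variable [DecidableEq G]

theorem card_subcodeSupportedIn_le_pow {C : AddSubgroup (ι → G)} {d : ℕ}
    (hC : ∀ c ∈ C, c ≠ 0 → d ≤ hammingNorm c) (hd : 0 < d) (T : Finset ι) :
    Nat.card (subcodeSupportedIn C T) ≤ Fintype.card G ^ (#T + 1 - d) := by
  obtain ⟨V, hVT, hV⟩ := exists_subset_card_eq (s := T) (n := #T + 1 - d) (by omega)
  have hinj : Function.Injective
      fun c : subcodeSupportedIn C T => restrictAddMonoidHom V c.1 := by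
    intro a b hab
    have ha := mem_subcodeSupportedIn.mp a.2
    have hb := mem_subcodeSupportedIn.mp b.2
    refine Subtype.ext (eq_of_mem_of_forall_notMem_eq hC ha.1 hb.1 (s := T \ V) ?_ fun i hi => ?_)
    · rw [card_sdiff_of_subset hVT]
      omega
    · by_cases hiT : i ∈ T
      · exact congrFun hab ⟨i, by simp_all⟩
      · rw [ha.2 i hiT, hb.2 i hiT]
  calc Nat.card (subcodeSupportedIn C T) ≤ Nat.card (V → G) :=
        Nat.card_le_card_of_injective _ hinj
    _ = _ := by simp [hV]

theorem card_subcodeSupportedIn {C : AddSubgroup (ι → G)} {d : ℕ}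
    (hC : ∀ c ∈ C, c ≠ 0 → d ≤ hammingNorm c) (hd : 0 < d)
    (hcard : Nat.card C = Fintype.card G ^ (Fintype.card ι + 1 - d)) (T : Finset ι) :
    Nat.card (subcodeSupportedIn C T) = Fintype.card G ^ (#T + 1 - d) := by
  refine le_antisymm (card_subcodeSupportedIn_le_pow hC hd T) ?_
  rcases lt_or_ge (#T + 1) d with hsmall | hlarge
  · rw [Nat.sub_eq_zero_of_le hsmall.le, pow_zero]
    exact Nat.card_pos
  · have hT : #T ≤ Fintype.card ι := card_le_univ T
    refine Nat.le_of_mul_le_mul_right ?_ (pow_pos (Fintype.card_pos (α := G)) (Fintype.card ι - #T))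
    rw [← pow_add, show #T + 1 - d + (Fintype.card ι - #T) = Fintype.card ι + 1 - d by omega,
      ← hcard]
    exact card_le_card_subcodeSupportedIn_mul_pow C T

end Subcode

theorem weightEnum_eq_sum_card_subcodeSupportedIn {G : Type*} [AddCommGroup G] [Fintype G]
    [DecidableEq G] {n : ℕ} (C : AddSubgroup (Fin n → G)) :
    weightEnum n (C : Set (Fin n → G)) = ∑ T : Finset (Fin n),
      (Nat.card (subcodeSupportedIn C T) : MvPolynomial (Fin 2) ℚ) * X 1 ^ #T
        * (X 0 - X 1) ^ (n - #T) := by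
  classical
  rw [weightEnum, finsum_mem_eq_toFinset_sum]
  calc ∑ c ∈ (C : Set (Fin n → G)).toFinset, X 0 ^ (n - hammingNorm c) * X 1 ^ hammingNorm c
      = ∑ c ∈ (C : Set (Fin n → G)).toFinset, ∑ T : Finset (Fin n),
          if ∀ i ∉ T, c i = 0 then (X 1 : MvPolynomial (Fin 2) ℚ) ^ #T * (X 0 - X 1) ^ (n - #T)
          else 0 :=
        sum_congr rfl fun c _ => by simpa using pow_mul_pow_hammingNorm_eq_sum c (X 0) (X 1)
    _ = _ := by
        rw [sum_comm]
        refine sum_congr rfl fun T _ => ?_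
        rw [← sum_filter, sum_const, nsmul_eq_mul, mul_assoc, ← SetLike.coe_sort_coe,
          Nat.card_eq_card_toFinset]
        congr 3
        ext c
        simp [mem_subcodeSupportedIn]

theorem sum_finset_pow_mul_pow_sub_pow {ι R : Type*} [Fintype ι] [CommRing R] (q x y : R)
    (d : ℕ) :
    ∑ T : Finset ι, q ^ (#T + 1 - d) * y ^ #T * (x - y) ^ (Fintype.card ι - #T)
        - x ^ Fintype.card ι
      = ∑ m ∈ range (Fintype.card ι + 1), (Fintype.card ι).choose m * (q ^ (m + 1 - d) - 1)
          * y ^ m * (x - y) ^ (Fintype.card ι - m) := by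
  classical
  rw [← powerset_univ,
    sum_powerset_apply_card fun m => q ^ (m + 1 - d) * y ^ m * (x - y) ^ (Fintype.card ι - m),
    card_univ]
  conv_lhs => rw [← add_sub_cancel y x, add_pow, ← sum_sub_distrib]
  refine sum_congr rfl fun m _ => ?_
  rw [nsmul_eq_mul]
  ring

namespace PowerSeries

variable {R : Type*} [CommRing R]

theorem one_sub_C_mul_X_mul_mk_pow (q : R) : (1 - C q * X) * mk (fun m => q ^ m) = 1 := by
  have := congrArg (rescale q) (mk_one_mul_one_sub_eq_one R)
  rw [map_mul, map_sub, map_one, rescale_X, rescale_mk, mul_comm] at this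
  simpa using this

theorem C_sub_one_mul_invOfUnit (q : R) :
    C (q - 1) * invOfUnit ((1 - X) * (1 - C q * X)) 1 = mk fun m => q ^ (m + 1) - 1 := by
  set f : R⟦X⟧ := (1 - X) * (1 - C q * X)
  have hf : f * invOfUnit f 1 = 1 := mul_invOfUnit f 1 (by simp [f])
  have hmk : (mk fun m => q ^ (m + 1) - 1 : R⟦X⟧) = C q * mk (fun m => q ^ m) - mk 1 := by
    ext m
    simp [pow_succ, mul_comm]
  -- partial fractions: `q / (1 - qt) - 1 / (1 - t) = (q - 1) / ((1 - t)(1 - qt))`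
  have hnum : f * (mk fun m => q ^ (m + 1) - 1) = C (q - 1) := by
    rw [hmk]
    calc f * (C q * mk (fun m => q ^ m) - mk 1)
        = C q * (1 - X) * ((1 - C q * X) * mk fun m => q ^ m)
            - (1 - C q * X) * (mk 1 * (1 - X)) := by ring
      _ = C (q - 1) := by
        rw [one_sub_C_mul_X_mul_mk_pow, mk_one_mul_one_sub_eq_one, map_sub, map_one]
        ring
  rw [← hnum, mul_right_comm, hf, one_mul]

theorem coeff_pow_mul_mk (x y : R) (g : ℕ → R) (n N : ℕ) :
    coeff N ((C x * X + C y * (1 - X)) ^ n * mk g)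
      = ∑ k ∈ range (n + 1),
          if k ≤ N then n.choose k * (x - y) ^ k * y ^ (n - k) * g (N - k) else 0 := by
  have hlin : C x * X + C y * (1 - X) = C (x - y) * X + C y := by
    rw [map_sub]
    ring
  rw [hlin, add_pow, sum_mul, map_sum]
  refine sum_congr rfl fun k _ => ?_
  have hterm : (C (x - y) * X) ^ k * C y ^ (n - k) * (n.choose k : R⟦X⟧) * mk g
      = C (n.choose k * (x - y) ^ k * y ^ (n - k)) * mk g * X ^ k := by
    simp only [mul_pow, map_mul, map_pow, map_natCast]
    ring
  rw [hterm, coeff_mul_X_pow']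
  split_ifs
  · rw [coeff_C_mul, coeff_mk]
  · rfl

theorem sub_one_mul_coeff_pow_mul_invOfUnit (q x y : R) {n d : ℕ} (hdn : d ≤ n) :
    (q - 1) * coeff (n - d)
        ((C x * X + C y * (1 - X)) ^ n * invOfUnit ((1 - X) * (1 - C q * X)) 1)
      = ∑ m ∈ range (n + 1), n.choose m * (q ^ (m + 1 - d) - 1) * y ^ m * (x - y) ^ (n - m) := by
  rw [← coeff_C_mul, mul_left_comm, C_sub_one_mul_invOfUnit, coeff_pow_mul_mk,
    ← sum_range_reflect]
  refine sum_congr rfl fun m hm => ?_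
  have hmn : m ≤ n := Nat.lt_succ_iff.mp (mem_range.mp hm)
  rw [Nat.add_sub_cancel]
  split_ifs with h
  · rw [Nat.sub_sub_self hmn, Nat.choose_symm hmn,
      show n - d - (n - m) + 1 = m + 1 - d by omega]
    ring
  · rw [Nat.sub_eq_zero_of_le (by omega : m + 1 ≤ d)]
    ring

end PowerSeries

theorem MDS_enum_as_coefficient_general {G : Type*} [AddCommGroup G] [Fintype G] [DecidableEq G]
    (n d : ℕ)
    (C : AddSubgroup (Fin n → G))
    (hcard : Nat.card C = Fintype.card G ^ (n + 1 - d))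
    (hmin : IsLeast {w | ∃ c ∈ C, c ≠ 0 ∧ hammingNorm c = w} d) :
    weightEnum n (C : Set (Fin n → G)) - X 0 ^ n
      = MvPolynomial.C ((Fintype.card G : ℚ) - 1) *
        PowerSeries.coeff (R := MvPolynomial (Fin 2) ℚ) (n - d)
          ((PowerSeries.C (X 0) * PowerSeries.X
              + PowerSeries.C (X 1) * (1 - PowerSeries.X)) ^ n *
            PowerSeries.invOfUnit
              ((1 - PowerSeries.X) *
                (1 - PowerSeries.C ((Fintype.card G : MvPolynomial (Fin 2) ℚ))
                      * PowerSeries.X)) 1) := by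
  obtain ⟨⟨c, -, hc, hcd⟩, hleast⟩ := hmin
  have hC : ∀ c ∈ C, c ≠ 0 → d ≤ hammingNorm c := fun c' hc' hne => hleast ⟨c', hc', hne, rfl⟩
  have hd : 0 < d := hcd ▸ hammingNorm_pos_iff.mpr hc
  have hdn : d ≤ n := hcd ▸ hammingNorm_le_card_fintype.trans (Fintype.card_fin n).le
  have hcount := card_subcodeSupportedIn hC hd (by rwa [Fintype.card_fin])
  rw [weightEnum_eq_sum_card_subcodeSupportedIn, map_sub, map_natCast, map_one,
    PowerSeries.sub_one_mul_coeff_pow_mul_invOfUnit _ _ _ hdn]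
  simp_rw [hcount]
  push_cast
  simpa using sum_finset_pow_mul_pow_sub_pow (ι := Fin n)
    (Fintype.card G : MvPolynomial (Fin 2) ℚ) (X 0) (X 1) d

/-- For an additive MDS code `C = MDS(n,d) ≤ Gⁿ` over a group of order
`q` with homogeneous weight enumerator `M_{n,d}(x,y)`, the quantity
`(M_{n,d}(x,y) - xⁿ)/(q-1)` equals the coefficient of `t^(n-d)` in the formal power
series `[xt + y(1-t)]ⁿ / ((1-t)(1-qt))` (the denominator inverted via its constant
coefficient `1`). -/
theorem MDS_enum_as_coefficient {G : Type*} [AddCommGroup G] [Fintype G] [DecidableEq G]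
    [Nontrivial G] (n d : ℕ)
    (C : AddSubgroup (Fin n → G))
    (hcard : Nat.card C = Fintype.card G ^ (n + 1 - d))
    (hmin : IsLeast {w | ∃ c ∈ C, c ≠ 0 ∧ hammingNorm c = w} d) :
    weightEnum n (C : Set (Fin n → G)) - X 0 ^ n
      = MvPolynomial.C ((Fintype.card G : ℚ) - 1) *
        PowerSeries.coeff (R := MvPolynomial (Fin 2) ℚ) (n - d)
          ((PowerSeries.C (X 0) * PowerSeries.X
              + PowerSeries.C (X 1) * (1 - PowerSeries.X)) ^ n *
            PowerSeries.invOfUnit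
              ((1 - PowerSeries.X) *
                (1 - PowerSeries.C ((Fintype.card G : MvPolynomial (Fin 2) ℚ))
                      * PowerSeries.X)) 1) :=
  MDS_enum_as_coefficient_general n d C hcard hmin
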